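/- arXiv:2105.08025 — 4 statements merged into one kernel-verified Lean document; each statement's English description precedes it below -/
import Mathlib

section
/- If U and W are finite subsets of {0,...,n} of the same cardinality with U^0 = W^1 and W^0 = U^1, then U = W; in particular, there are no distinct U, W with U^0 = W^1 and U^1 = W^0. -/
/-- 1-based position of `u` in the totally ordered finite set `S`. -/
def posIn (S : Finset ℕ) (u : ℕ) : ℕ := (S.filter (fun v => v ≤ u)).card

/-- Index function `ind_U(u_j) = (u_j + j) mod 2`, with `j` the 1-based position. -/
def idxFun (U : Finset ℕ) (u : ℕ) : ℕ := (u + posIn U u) % 2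

/-- `U^0`: elements whose value is congruent to their position mod 2. -/
def part0 (U : Finset ℕ) : Finset ℕ := U.filter (fun u => idxFun U u = 0)

/-- `U^1`: elements whose value is not congruent to their position mod 2. -/
def part1 (U : Finset ℕ) : Finset ℕ := U.filter (fun u => idxFun U u = 1)

/-- if `U^0 = W^1` and `W^0 = U^1` for equicardinal subsets of `{0,…,n}`,
then `U = W`. -/
theorem stmt_1 (n : ℕ) (U W : Finset ℕ)
    (hU : U ⊆ Finset.range (n + 1)) (hW : W ⊆ Finset.range (n + 1))
    (hcard : U.card = W.card)
    (h1 : part0 U = part1 W) (h2 : part0 W = part1 U) :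
    U = W := by
  ext x
  constructor <;> intro hx
  · rcases Nat.mod_two_eq_zero_or_one (x + posIn U x) with h | h
    · have hm : x ∈ part0 U := Finset.mem_filter.2 ⟨hx, h⟩
      rw [h1] at hm
      exact (Finset.mem_filter.1 hm).1
    · have hm : x ∈ part1 U := Finset.mem_filter.2 ⟨hx, h⟩
      rw [← h2] at hm
      exact (Finset.mem_filter.1 hm).1
  · rcases Nat.mod_two_eq_zero_or_one (x + posIn W x) with h | h
    · have hm : x ∈ part0 W := Finset.mem_filter.2 ⟨hx, h⟩
      rw [h2] at hm
      exact (Finset.mem_filter.1 hm).1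
    · have hm : x ∈ part1 W := Finset.mem_filter.2 ⟨hx, h⟩
      rw [← h1] at hm
      exact (Finset.mem_filter.1 hm).1
end

section
/- For the standard n-simplex with vertices {0,...,n}, the cup-i coproduct formula Δ_0([0,...,n]) = Σ_{U} d_{U^0} ⊗ d_{U^1} over all n-element subsets U of {0,...,n} equals the Alexander–Whitney diagonal: Σ_{j=0}^n [0,...,j] ⊗ [j,...,n]. -/
open scoped TensorProduct

variable {V : Type} [LinearOrder V]

/-- `dFace U x` deletes from the simplex `x` the vertices in (0-based) positions `U`. -/
def dFace (U : Finset ℕ) (x : Finset V) : Finset V :=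
  ((((x.sort (· ≤ ·)).zipIdx.map Prod.swap).filter (fun p => decide (p.1 ∉ U))).map Prod.snd).toFinset

/-- Mod 2 simplicial chains: the free `𝔽₂`-module on simplices (finite subsets of `V`). -/
abbrev Chains (V : Type) [LinearOrder V] := Finset V →₀ ZMod 2


noncomputable instance {V : Type} [LinearOrder V] :
    Zero (TensorProduct (ZMod 2) (Chains V) (Chains V)) :=
  (inferInstance : AddCommMonoid (TensorProduct (ZMod 2) (Chains V) (Chains V))).toAddMonoid.toZero

/-- Basis chain corresponding to a simplex. -/
noncomputable def eC (x : Finset V) : Chains V := Finsupp.single x 1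

/-- The cup-`i` coproduct on a basis simplex. -/
noncomputable def deltaSimplex (i : ℤ) (x : Finset V) :
    TensorProduct (ZMod 2) (Chains V) (Chains V) :=
  if 0 ≤ i ∧ i ≤ (x.card : ℤ) - 1 then
    ∑ U ∈ Finset.powersetCard (x.card - 1 - i.toNat) (Finset.range x.card),
      eC (dFace (part0 U) x) ⊗ₜ[ZMod 2] eC (dFace (part1 U) x)
  else (0 : TensorProduct (ZMod 2) (Chains V) (Chains V))

/-- The cup-`i` coproduct `Δᵢ`, as a linear map on chains. -/
noncomputable def deltaMap (V : Type) [LinearOrder V] (i : ℤ) :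
    Chains V →ₗ[ZMod 2] TensorProduct (ZMod 2) (Chains V) (Chains V) :=
  Finsupp.lift _ (ZMod 2) (Finset V) (deltaSimplex i)

/-- Mod 2 boundary of a basis simplex. -/
noncomputable def bdSimplex (x : Finset V) : Chains V :=
  if 2 ≤ x.card then ∑ i ∈ Finset.range x.card, eC (dFace {i} x) else 0

/-- Mod 2 simplicial boundary `∂ = Σ dᵢ`. -/
noncomputable def bdMap (V : Type) [LinearOrder V] : Chains V →ₗ[ZMod 2] Chains V :=
  Finsupp.lift _ (ZMod 2) (Finset V) bdSimplex

/-- Boundary on the tensor product: `∂(a⊗b) = ∂a⊗b + a⊗∂b` (signs trivial mod 2). -/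
noncomputable def bdT (V : Type) [LinearOrder V] :
    TensorProduct (ZMod 2) (Chains V) (Chains V) →ₗ[ZMod 2]
      TensorProduct (ZMod 2) (Chains V) (Chains V) :=
  TensorProduct.map (bdMap V) LinearMap.id + TensorProduct.map LinearMap.id (bdMap V)

/-- Transposition of tensor factors `T(a⊗b) = b⊗a`. -/
noncomputable def transp (V : Type) [LinearOrder V] :
    TensorProduct (ZMod 2) (Chains V) (Chains V) →ₗ[ZMod 2]
      TensorProduct (ZMod 2) (Chains V) (Chains V) :=
  (TensorProduct.comm (ZMod 2) (Chains V) (Chains V)).toLinearMap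

/-- Chain map induced by a simplicial (monotone) map `f`. -/
noncomputable def fChain {W : Type} [LinearOrder W] (f : V → W) :
    Chains V →ₗ[ZMod 2] Chains W :=
  Finsupp.lift _ (ZMod 2) (Finset V)
    (fun x => if (x.image f).card = x.card then eC (x.image f) else 0)

/-- Evaluation of a cochain on chains. -/
noncomputable def evalCochain (α : Finset V → ZMod 2) : Chains V →ₗ[ZMod 2] ZMod 2 :=
  Finsupp.lift _ (ZMod 2) (Finset V) α

/-- Evaluation of a tensor of cochains on a tensor of chains. -/
noncomputable def pairing (α β : Finset V → ZMod 2) :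
    TensorProduct (ZMod 2) (Chains V) (Chains V) →ₗ[ZMod 2] ZMod 2 :=
  (LinearMap.mul' (ZMod 2) (ZMod 2)) ∘ₗ TensorProduct.map (evalCochain α) (evalCochain β)

/-- Indicator cochain of a single simplex. -/
def indC (a : Finset V) : Finset V → ZMod 2 := fun y => if y = a then 1 else 0

/-! A size-`n` subset of `{0,…,n}` is `{0,…,n} \ {j}`. Its elements `u < j` have rank `u + 1`
and those `u > j` rank `u`, so `u + rank` is odd exactly for `u < j`: `U¹ = {0,…,j-1}` and
`U⁰ = {j+1,…,n}`, and the two faces are `[0,…,j]` and `[j,…,n]`. -/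

open Finset

lemma dFace_range (m : ℕ) (U : Finset ℕ) : dFace U (range m) = range m \ U := by
  ext i
  simp [dFace, List.mem_zipIdx_iff_getElem?, List.getElem?_eq_some_iff]

lemma posIn_range_erase {n j u : ℕ} (hu : u ≤ n) :
    posIn ((range (n + 1)).erase j) u = if j ≤ u then u else u + 1 := by
  have hfilter : ((range (n + 1)).erase j).filter (· ≤ u) = (range (u + 1)).erase j := by
    ext v
    simp only [mem_filter, mem_erase, mem_range]
    omega
  rw [posIn, hfilter]
  split_ifs with hj
  · rw [card_erase_of_mem (mem_range.2 (by omega)), card_range, Nat.add_sub_cancel]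
  · rw [erase_eq_of_notMem (by simp; omega), card_range]

lemma part0_range_erase (n j : ℕ) : part0 ((range (n + 1)).erase j) = Icc (j + 1) n := by
  ext u
  simp only [part0, mem_filter]
  simp only [idxFun, mem_erase, mem_range, mem_Icc]
  constructor
  · rintro ⟨⟨hne, hu⟩, hidx⟩
    rw [posIn_range_erase (by omega)] at hidx
    split_ifs at hidx <;> omega
  · rintro ⟨hj, hu⟩
    rw [posIn_range_erase hu, if_pos (by omega)]
    omega

lemma part1_range_erase {n j : ℕ} (hj : j ≤ n) : part1 ((range (n + 1)).erase j) = range j := by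
  ext u
  simp only [part1, mem_filter]
  simp only [idxFun, mem_erase, mem_range]
  constructor
  · rintro ⟨⟨hne, hu⟩, hidx⟩
    rw [posIn_range_erase (by omega)] at hidx
    split_ifs at hidx <;> omega
  · intro hu
    rw [posIn_range_erase (by omega), if_neg (by omega)]
    omega

lemma powersetCard_eq_image_erase {α : Type*} [DecidableEq α] {s : Finset α} {k : ℕ}
    (hk : k + 1 = #s) : powersetCard k s = s.image s.erase := by
  ext U
  rw [mem_powersetCard, mem_image, ← covBy_iff_exists_erase, covBy_iff_card_sdiff_eq_one]
  refine and_congr_right fun hU => ?_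
  rw [card_sdiff_of_subset hU]
  omega

lemma alexanderWhitney_term {n j : ℕ} (hj : j ≤ n) :
    eC (dFace (part0 ((range (n + 1)).erase j)) (range (n + 1))) ⊗ₜ[ZMod 2]
        eC (dFace (part1 ((range (n + 1)).erase j)) (range (n + 1)))
      = eC (range (j + 1)) ⊗ₜ[ZMod 2] eC (Icc j n) := by
  have hfront : range (n + 1) \ Icc (j + 1) n = range (j + 1) := by
    ext i; simp only [mem_sdiff, mem_range, mem_Icc]; omega
  have hback : range (n + 1) \ range j = Icc j n := by
    ext i; simp only [mem_sdiff, mem_range, mem_Icc]; omega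
  rw [part0_range_erase, part1_range_erase hj, dFace_range, dFace_range, hfront, hback]

/-- on the standard `n`-simplex `[0,…,n]`, the cup-0 coproduct formula
equals the Alexander–Whitney diagonal `Σ_j [0,…,j] ⊗ [j,…,n]`. -/
theorem stmt_7 (n : ℕ) :
    ∑ U ∈ Finset.powersetCard n (Finset.range (n + 1)),
        eC (dFace (part0 U) (Finset.range (n + 1))) ⊗ₜ[ZMod 2]
          eC (dFace (part1 U) (Finset.range (n + 1)))
      = ∑ j ∈ Finset.range (n + 1),
          eC (Finset.range (j + 1)) ⊗ₜ[ZMod 2] eC (Finset.Icc j n) := by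
  rw [powersetCard_eq_image_erase (card_range _).symm,
    sum_image fun _ hi _ hj => erase_injOn _ hi hj]
  exact sum_congr rfl fun j hj => alexanderWhitney_term (Nat.lt_succ_iff.mp (mem_range.mp hj))
end

section
/- The cup-i coproducts are natural with respect to simplicial maps: for any simplicial map f : X → Y between ordered simplicial complexes and any integer i, Δ_i ∘ f_• = (f_• ⊗ f_•) ∘ Δ_i as maps C_•(X;𝔽₂) → C_•(Y;𝔽₂) ⊗ C_•(Y;𝔽₂). -/
open scoped TensorProduct

variable {V : Type} [LinearOrder V]

/-!
Where `f` is injective on a simplex `x` it is strictly monotone there, so it preserves the vertex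
order of `x` and commutes with every face operator `d_U`; `f_• ⊗ f_•` then carries `Δᵢ x` term by
term to `Δᵢ (f x)`.

Otherwise monotonicity forces two consecutive vertices `p, p + 1` of `x` to have the same image.
For every `U`, one of `U⁰`, `U¹` contains neither `p` nor `p + 1`: if both lie in `U` they are
consecutive in `U` and so fall into the same part. The corresponding face of `x` still contains both
vertices and is killed by `f_•`, so every term of `(f_• ⊗ f_•) (Δᵢ x)` vanishes, as does
`Δᵢ (f_• x) = Δᵢ 0`.
-/

lemma posIn_succ {U : Finset ℕ} {p : ℕ} (hp : p + 1 ∈ U) : posIn U (p + 1) = posIn U p + 1 := by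
  rw [posIn, posIn, ← Finset.card_insert_of_notMem (s := U.filter (· ≤ p)) (a := p + 1) (by simp)]
  congr 1
  ext v
  simp only [Finset.mem_filter, Finset.mem_insert]
  grind

lemma idxFun_succ {U : Finset ℕ} {p : ℕ} (hp : p + 1 ∈ U) : idxFun U (p + 1) = idxFun U p := by
  rw [idxFun, idxFun, posIn_succ hp]
  omega

lemma part0_or_part1_avoids_adjacent (U : Finset ℕ) (p : ℕ) :
    (p ∉ part0 U ∧ p + 1 ∉ part0 U) ∨ (p ∉ part1 U ∧ p + 1 ∉ part1 U) := by
  have hbin : ∀ u, idxFun U u = 0 ∨ idxFun U u = 1 := fun u => Nat.mod_two_eq_zero_or_one _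
  have hsucc : p + 1 ∈ U → idxFun U (p + 1) = idxFun U p := idxFun_succ
  simp only [part0, part1, Finset.mem_filter]
  grind [hbin p, hbin (p + 1)]

section Faces

variable {x : Finset V}

lemma mem_dFace {U : Finset ℕ} {v : V} :
    v ∈ dFace U x ↔ ∃ j ∉ U, ∃ h : j < (x.sort (· ≤ ·)).length, (x.sort (· ≤ ·))[j] = v := by
  simp only [dFace, List.mem_toFinset, List.mem_map, List.mem_filter, List.mem_zipIdx_iff_getElem?,
    List.getElem?_eq_some_iff, decide_eq_true_eq]
  constructor
  · rintro ⟨_, ⟨⟨⟨w, j⟩, ⟨h, hw⟩, rfl⟩, hj⟩, rfl⟩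
    exact ⟨j, hj, h, hw⟩
  · rintro ⟨j, hj, h, rfl⟩
    exact ⟨(j, _), ⟨⟨(_, j), ⟨h, rfl⟩, rfl⟩, hj⟩, rfl⟩

lemma dFace_subset (U : Finset ℕ) : dFace U x ⊆ x := by
  intro v hv
  obtain ⟨j, -, h, rfl⟩ := mem_dFace.1 hv
  exact (Finset.mem_sort _).1 (List.getElem_mem h)

lemma not_injOn_dFace_of_adjacent_eq {W : Type*} {f : V → W} {S : Finset ℕ} {p : ℕ}
    (hp : p + 1 < (x.sort (· ≤ ·)).length)
    (hfp : f (x.sort (· ≤ ·))[p] = f (x.sort (· ≤ ·))[p + 1]) (hpS : p ∉ S) (hpS' : p + 1 ∉ S) :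
    ¬ Set.InjOn f (dFace S x) := fun hinj => by
  have hmem : ∀ j ∉ S, ∀ h : j < (x.sort (· ≤ ·)).length, (x.sort (· ≤ ·))[j] ∈ dFace S x :=
    fun j hj h => mem_dFace.2 ⟨j, hj, h, rfl⟩
  have := (Finset.sort_nodup x _).getElem_inj_iff.1 (hinj (hmem p hpS _) (hmem _ hpS' hp) hfp)
  omega

end Faces

section Naturality

variable {W : Type} [LinearOrder W] {f : V → W} {x : Finset V}

lemma sort_image_of_injOn (hf : Monotone f) (hinj : Set.InjOn f x) :
    (x.image f).sort (· ≤ ·) = (x.sort (· ≤ ·)).map f := by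
  rw [← Finset.sort_val, ← Finset.sort_val, Finset.image_val_of_injOn hinj]
  exact (Multiset.map_sort f _ _ _ fun a ha b hb =>
    ((hf.monotoneOn _).strictMonoOn_of_injOn hinj).le_iff_le ha hb |>.symm).symm

lemma dFace_image_of_injOn (hf : Monotone f) (hinj : Set.InjOn f x) (U : Finset ℕ) :
    dFace U (x.image f) = (dFace U x).image f := by
  ext w
  simp only [mem_dFace, Finset.mem_image, sort_image_of_injOn hf hinj, List.getElem_map,
    List.length_map]
  constructor
  · rintro ⟨j, hj, h, rfl⟩
    exact ⟨_, ⟨j, hj, h, rfl⟩, rfl⟩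
  · rintro ⟨_, ⟨j, hj, h, rfl⟩, rfl⟩
    exact ⟨j, hj, h, rfl⟩

lemma exists_adjacent_eq_of_not_injOn (hf : Monotone f) (h : ¬ Set.InjOn f x) :
    ∃ p, ∃ hp : p + 1 < (x.sort (· ≤ ·)).length,
      f (x.sort (· ≤ ·))[p] = f (x.sort (· ≤ ·))[p + 1] := by
  contrapose! h
  have hsorted : ((x.sort (· ≤ ·)).map f).SortedLT := by
    rw [List.sortedLT_iff_isChain, List.isChain_iff_getElem]
    intro j hj
    simp only [List.getElem_map]
    exact (hf ((Finset.sortedLT_sort x).getElem_le_getElem_iff.2 j.le_succ)).lt_of_ne (h j _)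
  intro a ha b hb hab
  exact List.inj_on_of_nodup_map hsorted.nodup ((Finset.mem_sort _).2 ha)
    ((Finset.mem_sort _).2 hb) hab

lemma lift_eC {M : Type} [AddCommMonoid M] [Module (ZMod 2) M] (g : Finset V → M) :
    Finsupp.lift M (ZMod 2) (Finset V) g (eC x) = g x := by
  simp [eC]

lemma deltaMap_eC (i : ℤ) : deltaMap V i (eC x) = deltaSimplex i x :=
  lift_eC _

lemma fChain_eC_of_injOn (h : Set.InjOn f x) : fChain f (eC x) = eC (x.image f) := by
  rw [fChain, lift_eC, if_pos (Finset.card_image_of_injOn h)]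

lemma fChain_eC_of_not_injOn (h : ¬ Set.InjOn f x) : fChain f (eC x) = 0 := by
  rw [fChain, lift_eC, if_neg (mt Finset.card_image_iff.1 h)]

lemma fChain_eC_dFace (hf : Monotone f) (hinj : Set.InjOn f x) (U : Finset ℕ) :
    fChain f (eC (dFace U x)) = eC (dFace U (x.image f)) := by
  rw [dFace_image_of_injOn hf hinj, fChain_eC_of_injOn (hinj.mono (dFace_subset U))]

lemma map_fChain_deltaSimplex_of_injOn (hf : Monotone f) (hinj : Set.InjOn f x) (i : ℤ) :
    TensorProduct.map (fChain f) (fChain f) (deltaSimplex i x) = deltaSimplex i (x.image f) := by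
  rw [deltaSimplex, deltaSimplex, Finset.card_image_of_injOn hinj]
  split_ifs
  · simp only [map_sum, TensorProduct.map_tmul, fChain_eC_dFace hf hinj]
  · exact map_zero _

lemma map_fChain_deltaSimplex_of_not_injOn (hf : Monotone f) (h : ¬ Set.InjOn f x) (i : ℤ) :
    TensorProduct.map (fChain f) (fChain f) (deltaSimplex i x) = 0 := by
  obtain ⟨p, hp, hfp⟩ := exists_adjacent_eq_of_not_injOn hf h
  rw [deltaSimplex]
  split_ifs
  · rw [map_sum]
    refine Finset.sum_eq_zero fun U _ => ?_
    rw [TensorProduct.map_tmul]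
    rcases part0_or_part1_avoids_adjacent U p with ⟨hp0, hq0⟩ | ⟨hp1, hq1⟩
    · rw [fChain_eC_of_not_injOn (not_injOn_dFace_of_adjacent_eq hp hfp hp0 hq0),
        TensorProduct.zero_tmul]
    · rw [fChain_eC_of_not_injOn (not_injOn_dFace_of_adjacent_eq hp hfp hp1 hq1),
        TensorProduct.tmul_zero]
  · exact map_zero _

end Naturality

/-- naturality of the cup-i coproducts: for a simplicial map `f`
(a monotone map of vertex posets) and any integer `i`,
`Δᵢ ∘ f_• = (f_• ⊗ f_•) ∘ Δᵢ`. -/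
theorem stmt_9 {V W : Type} [LinearOrder V] [LinearOrder W]
    (f : V → W) (hf : Monotone f) (i : ℤ) :
    (deltaMap W i) ∘ₗ (fChain f) =
      (TensorProduct.map (fChain f) (fChain f)) ∘ₗ (deltaMap V i) := by
  refine Finsupp.lhom_ext' fun x => LinearMap.ext_ring ?_
  change deltaMap W i (fChain f (eC x)) =
    TensorProduct.map (fChain f) (fChain f) (deltaMap V i (eC x))
  rw [deltaMap_eC]
  by_cases hinj : Set.InjOn f x
  · rw [fChain_eC_of_injOn hinj, deltaMap_eC, map_fChain_deltaSimplex_of_injOn hf hinj]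
  · rw [fChain_eC_of_not_injOn hinj, map_zero, map_fChain_deltaSimplex_of_not_injOn hf hinj]
end

section
/- Given two n-simplices a, b whose union x = a ∪ b is an (n+k)-simplex, there exists a subset U ⊆ {0,...,n+k} of cardinality 2k with {a, b} = {d_{U^0}(x), d_{U^1}(x)} if and only if the function ind : (a∖b) ∪ (b∖a) → ℤ/2 defined by ind(v) = pos_x(v) + pos_{(a∖b)∪(b∖a)}(v) mod 2 is constant on a∖b and on b∖a with different values on the two sets; moreover such U, if it exists, is unique and equals pos_x((a∖b) ∪ (b∖a)) shifted to 0-based positions. -/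
/-!
Vertex positions identify a simplex `x` order-isomorphically with `{0, …, #x - 1}`, and under
this identification `dFace W x` is the complement in `x` of the vertices at positions in `W`.
Hence `U = U⁰ ∪ U¹` is recovered from its two faces as the positions of
`(x ∖ d_{U⁰} x) ∪ (x ∖ d_{U¹} x) = (a ∖ b) ∪ (b ∖ a)`, which gives uniqueness. Conversely, for
`U` the positions of `s = (a ∖ b) ∪ (b ∖ a)`, the vertex `v ∈ s` has position `pos_s(v)` inside `U`,
so its position lies in `U⁰` iff `ind(v) = 1`: the two faces delete the vertices of `s` with
`ind = 1`, resp. `ind = 0`, and they are `a` and `b` exactly when `ind` is constant on `a ∖ b` and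
on `b ∖ a` with different values.
-/

open scoped TensorProduct

variable {V : Type} [LinearOrder V]

/-- 1-based position of `v` in the totally ordered finite set `S`. -/
def posV {V : Type} [LinearOrder V] (S : Finset V) (v : V) : ℕ :=
  (S.filter (fun w => w ≤ v)).card

/-- The index `ind(v) = pos_x(v) + pos_s(v) mod 2` from the algorithm. -/
def indComb {V : Type} [LinearOrder V] (x s : Finset V) (v : V) : ℕ :=
  (posV x v + posV s v) % 2

open Finset

lemma part0_union_part1 (U : Finset ℕ) : part0 U ∪ part1 U = U := by
  rw [part0, part1, ← filter_or]
  exact filter_true_of_mem fun u _ => Nat.mod_two_eq_zero_or_one _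

section Positions

variable {x : Finset V} {v : V}

lemma posV_orderEmbOfFin (x : Finset V) (i : Fin #x) : posV x (x.orderEmbOfFin rfl i) = i + 1 := by
  have : x.filter (· ≤ x.orderEmbOfFin rfl i) = (Iic i).map (x.orderEmbOfFin rfl).toEmbedding := by
    ext v
    constructor
    · intro hv
      obtain ⟨hvx, hle⟩ := mem_filter.1 hv
      obtain ⟨j, rfl⟩ : v ∈ Set.range (x.orderEmbOfFin rfl) := by rwa [range_orderEmbOfFin]
      simpa using hle
    · intro hv
      obtain ⟨j, hj, rfl⟩ := mem_map.1 hv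
      exact mem_filter.2 ⟨orderEmbOfFin_mem .., (x.orderEmbOfFin rfl).monotone (mem_Iic.1 hj)⟩
  rw [posV, this, card_map, Fin.card_Iic]

lemma posV_sort_getElem (x : Finset V) (i : ℕ) (h : i < (x.sort (· ≤ ·)).length) :
    posV x (x.sort (· ≤ ·))[i] = i + 1 :=
  posV_orderEmbOfFin x ⟨i, by simpa using h⟩

lemma mem_dFace_s18 {U : Finset ℕ} : v ∈ dFace U x ↔ v ∈ x ∧ posV x v - 1 ∉ U := by
  simp only [dFace, List.mem_toFinset, List.mem_map, List.mem_filter, List.mem_zipIdx_iff_getElem?,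
    List.getElem?_eq_some_iff, Prod.exists, Prod.swap_prod_mk, Prod.mk.injEq, decide_eq_true_eq]
  constructor
  · rintro ⟨i, _, ⟨⟨_, _, ⟨h, hget⟩, rfl, rfl⟩, hiU⟩, rfl⟩
    rw [← hget]
    exact ⟨(mem_sort _).1 (List.getElem_mem h), by rwa [posV_sort_getElem]⟩
  · rintro ⟨hvx, hvU⟩
    obtain ⟨i, h, rfl⟩ := List.mem_iff_getElem.1 ((mem_sort (· ≤ ·)).2 hvx)
    exact ⟨i, _, ⟨⟨_, i, ⟨h, rfl⟩, rfl, rfl⟩, by rwa [posV_sort_getElem] at hvU⟩, rfl⟩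

lemma one_le_posV (hv : v ∈ x) : 1 ≤ posV x v :=
  card_pos.2 ⟨v, mem_filter.2 ⟨hv, le_rfl⟩⟩

lemma posV_le_card : posV x v ≤ #x := card_filter_le _ _

lemma posV_sub_one_strictMonoOn : StrictMonoOn (fun v => posV x v - 1) x := by
  intro v hv w hw hvw
  have hlt : posV x v < posV x w := by
    refine card_lt_card ⟨monotone_filter_right _ fun u _ hu => hu.trans hvw.le, fun h => ?_⟩
    exact not_le.2 hvw (mem_filter.1 (h (mem_filter.2 ⟨hw, le_rfl⟩))).2
  have := one_le_posV hv
  show posV x v - 1 < posV x w - 1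
  omega

lemma image_posV_sub_one : x.image (fun v => posV x v - 1) = range #x := by
  refine eq_of_subset_of_card_le (fun u hu => ?_) ?_
  · obtain ⟨v, hv, rfl⟩ := mem_image.1 hu
    have := one_le_posV hv
    have := posV_le_card (x := x) (v := v)
    rw [mem_range]
    omega
  · rw [card_range, card_image_of_injOn posV_sub_one_strictMonoOn.injOn]

lemma dFace_image_posV_sub_one {c : Finset V} (hc : c ⊆ x) :
    dFace (c.image fun v => posV x v - 1) x = x \ c := by
  ext v
  rw [mem_dFace_s18, mem_sdiff, mem_image]
  refine and_congr_right fun hv => not_congr ⟨?_, fun h => ⟨v, h, rfl⟩⟩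
  rintro ⟨w, hw, hwv⟩
  rwa [← posV_sub_one_strictMonoOn.injOn (hc hw) hv hwv]

lemma image_sdiff_dFace {W : Finset ℕ} (hW : W ⊆ range #x) :
    (x \ dFace W x).image (fun v => posV x v - 1) = W := by
  ext u
  simp only [mem_image, mem_sdiff, mem_dFace_s18, not_and, not_not]
  constructor
  · rintro ⟨v, ⟨hv, hvW⟩, rfl⟩
    exact hvW hv
  · intro hu
    obtain ⟨v, hv, rfl⟩ := mem_image.1 (image_posV_sub_one (x := x) ▸ hW hu)
    exact ⟨v, ⟨hv, fun _ => hu⟩, rfl⟩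

lemma eq_image_sdiff_dFace_part {U : Finset ℕ} (hU : U ⊆ range #x) :
    U = ((x \ dFace (part0 U) x) ∪ (x \ dFace (part1 U) x)).image (fun v => posV x v - 1) := by
  have h0 : part0 U ⊆ U := filter_subset _ _
  have h1 : part1 U ⊆ U := filter_subset _ _
  rw [image_union, image_sdiff_dFace (h0.trans hU), image_sdiff_dFace (h1.trans hU),
    part0_union_part1]

lemma posIn_image_posV_sub_one {s : Finset V} (hs : s ⊆ x) (hv : v ∈ s) :
    posIn (s.image fun v => posV x v - 1) (posV x v - 1) = posV s v := by
  rw [posIn, filter_image, card_image_of_injOn (posV_sub_one_strictMonoOn.injOn.mono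
    ((filter_subset _ _).trans hs)), posV]
  congr 1
  exact filter_congr fun w hw => posV_sub_one_strictMonoOn.le_iff_le (hs hw) (hs hv)

lemma idxFun_image_posV_sub_one {s : Finset V} (hs : s ⊆ x) (hv : v ∈ s) :
    idxFun (s.image fun v => posV x v - 1) (posV x v - 1) = (indComb x s v + 1) % 2 := by
  have := one_le_posV (hs hv)
  rw [idxFun, posIn_image_posV_sub_one hs hv, indComb]
  omega

lemma dFace_part0_image {s : Finset V} (hs : s ⊆ x) :
    dFace (part0 (s.image fun v => posV x v - 1)) x = x \ s.filter (indComb x s · = 1) := by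
  rw [part0, filter_image, dFace_image_posV_sub_one ((filter_subset _ _).trans hs)]
  congr 1
  refine filter_congr fun v hv => ?_
  rw [idxFun_image_posV_sub_one hs hv]
  have : indComb x s v < 2 := Nat.mod_lt _ two_pos
  omega

lemma dFace_part1_image {s : Finset V} (hs : s ⊆ x) :
    dFace (part1 (s.image fun v => posV x v - 1)) x = x \ s.filter (indComb x s · = 0) := by
  rw [part1, filter_image, dFace_image_posV_sub_one ((filter_subset _ _).trans hs)]
  congr 1
  refine filter_congr fun v hv => ?_
  rw [idxFun_image_posV_sub_one hs hv]
  have : indComb x s v < 2 := Nat.mod_lt _ two_pos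
  omega

end Positions

lemma union_sdiff_filter_symmDiff_eq_left_iff (a b : Finset V) (p : V → Prop) [DecidablePred p] :
    (a ∪ b) \ ((a \ b) ∪ (b \ a)).filter p = a ↔ (∀ v ∈ a \ b, ¬ p v) ∧ ∀ v ∈ b \ a, p v := by
  constructor
  · intro h
    refine ⟨fun v hv hp => ?_, fun v hv => by_contra fun hp => ?_⟩
    · have hv' : v ∈ (a ∪ b) \ ((a \ b) ∪ (b \ a)).filter p := by
        rw [h]; exact (mem_sdiff.1 hv).1
      exact (mem_sdiff.1 hv').2 (mem_filter.2 ⟨mem_union_left _ hv, hp⟩)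
    · refine (mem_sdiff.1 hv).2 ?_
      rw [← h]
      exact mem_sdiff.2 ⟨mem_union_right _ (mem_sdiff.1 hv).1, fun hf => hp (mem_filter.1 hf).2⟩
  · rintro ⟨hab, hba⟩
    ext v
    simp only [mem_sdiff, mem_union, mem_filter] at hab hba ⊢
    by_cases hva : v ∈ a <;> by_cases hvb : v ∈ b <;> simp_all

lemma union_sdiff_filter_symmDiff_eq_right_iff (a b : Finset V) (p : V → Prop) [DecidablePred p] :
    (a ∪ b) \ ((a \ b) ∪ (b \ a)).filter p = b ↔ (∀ v ∈ a \ b, p v) ∧ ∀ v ∈ b \ a, ¬ p v := by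
  rw [union_comm a b, union_comm (a \ b), and_comm]
  exact union_sdiff_filter_symmDiff_eq_left_iff b a p

lemma zero_one_or_one_zero_iff {α : Type*} {A B : Finset α} (hcard : #A = #B) {g : α → ℕ}
    (hg : ∀ v, g v < 2) :
    ((∀ v ∈ A, g v = 0) ∧ (∀ v ∈ B, g v = 1)) ∨ ((∀ v ∈ A, g v = 1) ∧ (∀ v ∈ B, g v = 0)) ↔
      (∀ v ∈ A, ∀ w ∈ A, g v = g w) ∧ (∀ v ∈ B, ∀ w ∈ B, g v = g w) ∧
        ∀ v ∈ A, ∀ w ∈ B, g v ≠ g w := by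
  constructor
  · rintro (⟨hA, hB⟩ | ⟨hA, hB⟩) <;>
      exact ⟨fun v hv w hw => by rw [hA v hv, hA w hw], fun v hv w hw => by rw [hB v hv, hB w hw],
        fun v hv w hw => by simp [hA v hv, hB w hw]⟩
  · rintro ⟨hA, hB, hAB⟩
    obtain rfl | ⟨v₀, hv₀⟩ := A.eq_empty_or_nonempty
    · rw [card_empty, eq_comm, card_eq_zero] at hcard
      simp [hcard]
    obtain ⟨w₀, hw₀⟩ := card_pos.1 (hcard ▸ card_pos.2 ⟨v₀, hv₀⟩)
    have hv₀w₀ := hAB v₀ hv₀ w₀ hw₀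
    have := hg v₀
    have := hg w₀
    obtain h₀ | h₁ : g v₀ = 0 ∨ g v₀ = 1 := by omega
    · exact Or.inl ⟨fun v hv => (hA v hv v₀ hv₀).trans h₀,
        fun w hw => (hB w hw w₀ hw₀).trans (by omega)⟩
    · exact Or.inr ⟨fun v hv => (hA v hv v₀ hv₀).trans h₁,
        fun w hw => (hB w hw w₀ hw₀).trans (by omega)⟩

section SymmDiff

variable (a b : Finset V)

lemma eq_image_symmDiff_of_dFace {U : Finset ℕ} (hU : U ⊆ range #(a ∪ b))
    (h : (dFace (part0 U) (a ∪ b) = a ∧ dFace (part1 U) (a ∪ b) = b) ∨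
      (dFace (part0 U) (a ∪ b) = b ∧ dFace (part1 U) (a ∪ b) = a)) :
    U = ((a \ b) ∪ (b \ a)).image (fun v => posV (a ∪ b) v - 1) := by
  rcases h with ⟨h0, h1⟩ | ⟨h0, h1⟩ <;> refine (eq_image_sdiff_dFace_part hU).trans ?_ <;>
    rw [h0, h1, union_sdiff_left, union_sdiff_right]
  rw [union_comm (b \ a)]

lemma dFace_image_symmDiff_iff :
    letI P := ((a \ b) ∪ (b \ a)).image (fun v => posV (a ∪ b) v - 1)
    letI ind := indComb (a ∪ b) ((a \ b) ∪ (b \ a))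
    ((dFace (part0 P) (a ∪ b) = a ∧ dFace (part1 P) (a ∪ b) = b) ∨
        (dFace (part0 P) (a ∪ b) = b ∧ dFace (part1 P) (a ∪ b) = a)) ↔
      ((∀ v ∈ a \ b, ind v = 0) ∧ (∀ v ∈ b \ a, ind v = 1)) ∨
        ((∀ v ∈ a \ b, ind v = 1) ∧ (∀ v ∈ b \ a, ind v = 0)) := by
  have hsub : (a \ b) ∪ (b \ a) ⊆ a ∪ b := union_subset_union sdiff_subset sdiff_subset
  have hne1 : ∀ v, ¬ indComb (a ∪ b) ((a \ b) ∪ (b \ a)) v = 1 ↔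
      indComb (a ∪ b) ((a \ b) ∪ (b \ a)) v = 0 := fun _ => Nat.mod_two_ne_one
  have hne0 : ∀ v, ¬ indComb (a ∪ b) ((a \ b) ∪ (b \ a)) v = 0 ↔
      indComb (a ∪ b) ((a \ b) ∪ (b \ a)) v = 1 := fun _ => Nat.mod_two_ne_zero
  rw [dFace_part0_image hsub, dFace_part1_image hsub,
    union_sdiff_filter_symmDiff_eq_left_iff, union_sdiff_filter_symmDiff_eq_right_iff,
    union_sdiff_filter_symmDiff_eq_right_iff, union_sdiff_filter_symmDiff_eq_left_iff]
  simp only [hne0, hne1, and_self]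

end SymmDiff

theorem stmt_18_general {V : Type} [LinearOrder V] (n k : ℕ)
    (a b x : Finset V) (ha : a.card = n + 1) (hb : b.card = n + 1)
    (hx : x = a ∪ b) (hxc : x.card = n + k + 1) :
    ((∃ U ⊆ Finset.range (n + k + 1), U.card = 2 * k ∧
        ((dFace (part0 U) x = a ∧ dFace (part1 U) x = b) ∨
         (dFace (part0 U) x = b ∧ dFace (part1 U) x = a)))
      ↔ ((∀ v ∈ a \ b, ∀ w ∈ a \ b,
            indComb x ((a \ b) ∪ (b \ a)) v = indComb x ((a \ b) ∪ (b \ a)) w) ∧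
         (∀ v ∈ b \ a, ∀ w ∈ b \ a,
            indComb x ((a \ b) ∪ (b \ a)) v = indComb x ((a \ b) ∪ (b \ a)) w) ∧
         (∀ v ∈ a \ b, ∀ w ∈ b \ a,
            indComb x ((a \ b) ∪ (b \ a)) v ≠ indComb x ((a \ b) ∪ (b \ a)) w)))
    ∧ (∀ U ⊆ Finset.range (n + k + 1), U.card = 2 * k →
        ((dFace (part0 U) x = a ∧ dFace (part1 U) x = b) ∨
         (dFace (part0 U) x = b ∧ dFace (part1 U) x = a)) →
        U = ((a \ b) ∪ (b \ a)).image (fun v => posV x v - 1)) := by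
  subst hx
  have hcard_ab : #(a \ b) = k := by
    rw [← union_sdiff_right, card_sdiff_of_subset subset_union_right]; omega
  have hcard_ba : #(b \ a) = k := by
    rw [← union_sdiff_left, card_sdiff_of_subset subset_union_left]; omega
  rw [← zero_one_or_one_zero_iff (hcard_ab.trans hcard_ba.symm)
    (g := indComb (a ∪ b) ((a \ b) ∪ (b \ a))) fun _ => Nat.mod_lt _ two_pos,
    ← dFace_image_symmDiff_iff, ← hxc]
  refine ⟨⟨fun ⟨U, hU, _, h⟩ => ?_, fun h => ⟨_, ?_, ?_, h⟩⟩,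
    fun U hU _ h => eq_image_symmDiff_of_dFace a b hU h⟩
  · rwa [eq_image_symmDiff_of_dFace a b hU h] at h
  · rw [← image_posV_sub_one]
    exact image_subset_image (union_subset_union sdiff_subset sdiff_subset)
  · rw [card_image_of_injOn (posV_sub_one_strictMonoOn.injOn.mono
      (union_subset_union sdiff_subset sdiff_subset)), card_union_of_disjoint disjoint_sdiff_sdiff, hcard_ab, hcard_ba, two_mul]

/-- correctness criterion of the algorithm. Given `n`-simplices `a ≠ b`
whose union `x = a ∪ b` is an `(n+k)`-simplex, a set `U ⊆ {0,…,n+k}` of cardinality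
`2k` with `{a,b} = {d_{U^0}(x), d_{U^1}(x)}` exists iff the index function
`ind(v) = pos_x(v) + pos_{(a∖b)∪(b∖a)}(v) mod 2` is constant on `a∖b` and on `b∖a`
with different values; moreover such `U` is unique and equals the set of 0-based
positions in `x` of `(a∖b) ∪ (b∖a)`. -/
theorem stmt_18 {V : Type} [LinearOrder V] (n k : ℕ) (hk1 : 1 ≤ k) (hk2 : k ≤ n)
    (a b x : Finset V) (ha : a.card = n + 1) (hb : b.card = n + 1) (hab : a ≠ b)
    (hx : x = a ∪ b) (hxc : x.card = n + k + 1) :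
    ((∃ U ⊆ Finset.range (n + k + 1), U.card = 2 * k ∧
        ((dFace (part0 U) x = a ∧ dFace (part1 U) x = b) ∨
         (dFace (part0 U) x = b ∧ dFace (part1 U) x = a)))
      ↔ ((∀ v ∈ a \ b, ∀ w ∈ a \ b,
            indComb x ((a \ b) ∪ (b \ a)) v = indComb x ((a \ b) ∪ (b \ a)) w) ∧
         (∀ v ∈ b \ a, ∀ w ∈ b \ a,
            indComb x ((a \ b) ∪ (b \ a)) v = indComb x ((a \ b) ∪ (b \ a)) w) ∧
         (∀ v ∈ a \ b, ∀ w ∈ b \ a,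
            indComb x ((a \ b) ∪ (b \ a)) v ≠ indComb x ((a \ b) ∪ (b \ a)) w)))
    ∧ (∀ U ⊆ Finset.range (n + k + 1), U.card = 2 * k →
        ((dFace (part0 U) x = a ∧ dFace (part1 U) x = b) ∨
         (dFace (part0 U) x = b ∧ dFace (part1 U) x = a)) →
        U = ((a \ b) ∪ (b \ a)).image (fun v => posV x v - 1)) :=
  stmt_18_general n k a b x ha hb hx hxc
end
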